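/- arXiv:2103.06800 — 5 statements merged into one kernel-verified Lean document; each statement's English description precedes it below -/
import Mathlib

section
/- Let x = tan(π/11)·tan(π/22). Then tan(π/11)/tan(2π/11) = 1/2 − x − x^2/2. -/
open Real

theorem scale_two_of_eleven_poly :
    tan (π / 11) / tan (2 * π / 11) =
      1 / 2 - tan (π / 11) * tan (π / 22) - (tan (π / 11) * tan (π / 22)) ^ 2 / 2 := by
  have hpi := Real.pi_pos
  set t := tan (π / 22) with ht
  have h1 : tan (π / 11) = 2 * t / (1 - t ^ 2) := by
    rw [show π / 11 = 2 * (π / 22) by ring, Real.tan_two_mul]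
  have h2 : tan (2 * π / 11) = 2 * tan (π / 11) / (1 - tan (π / 11) ^ 2) := by
    rw [show 2 * π / 11 = 2 * (π / 11) by ring, Real.tan_two_mul]
  have htpos : 0 < t := Real.tan_pos_of_pos_of_lt_pi_div_two (by positivity)
    (by nlinarith)
  have htlt : t < 1 := by
    have := Real.tan_lt_tan_of_nonneg_of_lt_pi_div_two (x := π / 22) (y := π / 4)
      (by positivity) (by nlinarith) (by nlinarith)
    rwa [Real.tan_pi_div_four] at this
  have hden : 1 - t ^ 2 ≠ 0 := by nlinarith
  have hTpos : 0 < tan (π / 11) := by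
    rw [h1]
    have : (0:ℝ) < 1 - t ^ 2 := by nlinarith
    positivity
  have hTlt : tan (π / 11) < 1 := by
    have := Real.tan_lt_tan_of_nonneg_of_lt_pi_div_two (x := π / 11) (y := π / 4)
      (by positivity) (by nlinarith) (by nlinarith)
    rwa [Real.tan_pi_div_four] at this
  have hTden : 1 - tan (π / 11) ^ 2 ≠ 0 := by nlinarith
  rw [h2, h1]
  have h2t : (2 : ℝ) * t ≠ 0 := by positivity
  field_simp
  ring
end

section
/- Let x = tan(π/18)·tan(π/9). Then (11 − 169x − 25x^2)/3 = tan(π/18)^2·(1 − 7x − x^2). -/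
open Real

theorem hPM_consistency_S1 :
    (11 - 169 * (tan (π / 18) * tan (π / 9)) - 25 * (tan (π / 18) * tan (π / 9)) ^ 2) / 3 =
      tan (π / 18) ^ 2 *
        (1 - 7 * (tan (π / 18) * tan (π / 9)) - (tan (π / 18) * tan (π / 9)) ^ 2) := by
  have hpi := pi_pos
  have hc : cos (π / 18) ≠ 0 :=
    (cos_pos_of_mem_Ioo ⟨by linarith, by linarith⟩).ne'
  have hpy : sin (π/18)^2 + cos (π/18)^2 = 1 := sin_sq_add_cos_sq _
  have hs : 3 * sin (π/18) - 4 * sin (π/18)^3 = 1/2 := by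
    have h := sin_three_mul (π/18)
    rw [show 3*(π/18) = π/6 by ring, sin_pi_div_six] at h
    linarith
  have hd : cos (π/18)^2 - sin (π/18)^2 ≠ 0 := by
    rw [← cos_two_mul', show 2*(π/18) = π/9 by ring]
    exact (cos_pos_of_mem_Ioo ⟨by linarith, by linarith⟩).ne'
  have hu : tan (π/9) = 2 * sin (π/18) * cos (π/18) / (cos (π/18)^2 - sin (π/18)^2) := by
    rw [show π/9 = 2*(π/18) by ring, tan_eq_sin_div_cos, sin_two_mul,
      ← cos_two_mul']
  rw [hu, tan_eq_sin_div_cos]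
  field_simp
  linear_combination ((11:ℝ) + (11:ℝ) * Real.cos (π/18)^2 + (11:ℝ) * Real.cos (π/18)^4 + (11:ℝ) * Real.cos (π/18)^6 + (11:ℝ) * Real.cos (π/18)^8 + (11:ℝ) * Real.cos (π/18)^10 + (11:ℝ) * Real.cos (π/18)^12 + (11:ℝ) * Real.cos (π/18)^14 + (11:ℝ) * Real.cos (π/18)^16 + (11:ℝ) * Real.cos (π/18)^18 + (-506:ℝ) * Real.sin (π/18)^2 + (-495:ℝ) * Real.sin (π/18)^2 * Real.cos (π/18)^2 + (-484:ℝ) * Real.sin (π/18)^2 * Real.cos (π/18)^4 + (-473:ℝ) * Real.sin (π/18)^2 * Real.cos (π/18)^6 + (-462:ℝ) * Real.sin (π/18)^2 * Real.cos (π/18)^8 + (-451:ℝ) * Real.sin (π/18)^2 * Real.cos (π/18)^10 + (-440:ℝ) * Real.sin (π/18)^2 * Real.cos (π/18)^12 + (-429:ℝ) * Real.sin (π/18)^2 * Real.cos (π/18)^14 + (-418:ℝ) * Real.sin (π/18)^2 * Real.cos (π/18)^16 + (5467:ℝ) * Real.sin (π/18)^4 + (4972:ℝ) * Real.sin (π/18)^4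 * Real.cos (π/18)^2 + (4488:ℝ) * Real.sin (π/18)^4 * Real.cos (π/18)^4 + (4015:ℝ) * Real.sin (π/18)^4 * Real.cos (π/18)^6 + (3553:ℝ) * Real.sin (π/18)^4 * Real.cos (π/18)^8 + (3102:ℝ) * Real.sin (π/18)^4 * Real.cos (π/18)^10 + (2662:ℝ) * Real.sin (π/18)^4 * Real.cos (π/18)^12 + (2233:ℝ) * Real.sin (π/18)^4 * Real.cos (π/18)^14 + (-28468:ℝ) * Real.sin (π/18)^6 + (-23496:ℝ) * Real.sin (π/18)^6 * Real.cos (π/18)^2 + (-19008:ℝ) * Real.sin (π/18)^6 * Real.cos (π/18)^4 + (-14993:ℝ) * Real.sin (π/18)^6 * Real.cos (π/18)^6 + (-11440:ℝ) * Real.sin (π/18)^6 * Real.cos (π/18)^8 + (-8338:ℝ) * Real.sin (π/18)^6 * Real.cos (π/18)^10 + (-5676:ℝ) * Real.sin (π/18)^6 * Real.cos (π/18)^12 + (86328:ℝ) * Real.sin (π/18)^8 + (62832:ℝ) * Real.sin (π/18)^8 * Real.cos (π/18)^2 + (43824:ℝ) * Real.sin (π/18)^8 * Real.cos (π/18)^4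 + (28831:ℝ) * Real.sin (π/18)^8 * Real.cos (π/18)^6 + (17391:ℝ) * Real.sin (π/18)^8 * Real.cos (π/18)^8 + (9053:ℝ) * Real.sin (π/18)^8 * Real.cos (π/18)^10 + (-163680:ℝ) * Real.sin (π/18)^10 + (-100848:ℝ) * Real.sin (π/18)^10 * Real.cos (π/18)^2 + (-57024:ℝ) * Real.sin (π/18)^10 * Real.cos (π/18)^4 + (-28193:ℝ) * Real.sin (π/18)^10 * Real.cos (π/18)^6 + (-10802:ℝ) * Real.sin (π/18)^10 * Real.cos (π/18)^8 + (197296:ℝ) * Real.sin (π/18)^12 + (96448:ℝ) * Real.sin (π/18)^12 * Real.cos (π/18)^2 + (39424:ℝ) * Real.sin (π/18)^12 * Real.cos (π/18)^4 + (11231:ℝ) * Real.sin (π/18)^12 * Real.cos (π/18)^6 + (-147136:ℝ) * Real.sin (π/18)^14 + (-50688:ℝ) * Real.sin (π/18)^14 * Real.cos (π/18)^2 + (-11264:ℝ) * Real.sin (π/18)^14 * Real.cos (π/18)^4 + (61952:ℝ) * Real.sin (π/18)^16 + (11264:ℝ) * Real.sin (π/18)^16 * Real.cos (π/18)^2 +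 (-11264:ℝ) * Real.sin (π/18)^18) * hpy +
    ((-22:ℝ) + (-132:ℝ) * Real.sin (π/18)^1 + (242:ℝ) * Real.sin (π/18)^2 + (1628:ℝ) * Real.sin (π/18)^3 + (-1122:ℝ) * Real.sin (π/18)^4 + (-8668:ℝ) * Real.sin (π/18)^5 + (2838:ℝ) * Real.sin (π/18)^6 + (26004:ℝ) * Real.sin (π/18)^7 + (-4224:ℝ) * Real.sin (π/18)^8 + (-48048:ℝ) * Real.sin (π/18)^9 + (3696:ℝ) * Real.sin (π/18)^10 + (55968:ℝ) * Real.sin (π/18)^11 + (-1760:ℝ) * Real.sin (π/18)^12 + (-40128:ℝ) * Real.sin (π/18)^13 + (352:ℝ) * Real.sin (π/18)^14 + (16192:ℝ) * Real.sin (π/18)^15 + (-2816:ℝ) * Real.sin (π/18)^17) * hs +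
    ((-11:ℝ) * Real.cos (π/18)^6 + (-11:ℝ) * Real.cos (π/18)^8 + (-11:ℝ) * Real.cos (π/18)^10 + (-11:ℝ) * Real.cos (π/18)^12 + (-11:ℝ) * Real.cos (π/18)^14 + (-11:ℝ) * Real.cos (π/18)^16 + (-11:ℝ) * Real.cos (π/18)^18 + (121:ℝ) * Real.sin (π/18)^2 + (121:ℝ) * Real.sin (π/18)^2 * Real.cos (π/18)^2 + (484:ℝ) * Real.sin (π/18)^2 * Real.cos (π/18)^4 + (473:ℝ) * Real.sin (π/18)^2 * Real.cos (π/18)^6 + (462:ℝ) * Real.sin (π/18)^2 * Real.cos (π/18)^8 + (451:ℝ) * Real.sin (π/18)^2 * Real.cos (π/18)^10 + (440:ℝ) * Real.sin (π/18)^2 * Real.cos (π/18)^12 + (429:ℝ) * Real.sin (π/18)^2 * Real.cos (π/18)^14 + (418:ℝ) * Real.sin (π/18)^2 * Real.cos (π/18)^16 + (-4796:ℝ) * Real.sin (π/18)^4 + (-4972:ℝ) * Real.sin (π/18)^4 * Real.cos (π/18)^2 + (-4488:ℝ) * Real.sin (π/18)^4 * Real.cos (π/18)^4 + (-4015:ℝ)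 * Real.sin (π/18)^4 * Real.cos (π/18)^6 + (-3553:ℝ) * Real.sin (π/18)^4 * Real.cos (π/18)^8 + (-3102:ℝ) * Real.sin (π/18)^4 * Real.cos (π/18)^10 + (-2662:ℝ) * Real.sin (π/18)^4 * Real.cos (π/18)^12 + (-2233:ℝ) * Real.sin (π/18)^4 * Real.cos (π/18)^14 + (28468:ℝ) * Real.sin (π/18)^6 + (23496:ℝ) * Real.sin (π/18)^6 * Real.cos (π/18)^2 + (19008:ℝ) * Real.sin (π/18)^6 * Real.cos (π/18)^4 + (14993:ℝ) * Real.sin (π/18)^6 * Real.cos (π/18)^6 + (11440:ℝ) * Real.sin (π/18)^6 * Real.cos (π/18)^8 + (8338:ℝ) * Real.sin (π/18)^6 * Real.cos (π/18)^10 + (5676:ℝ) * Real.sin (π/18)^6 * Real.cos (π/18)^12 + (-86328:ℝ) * Real.sin (π/18)^8 + (-62832:ℝ) * Real.sin (π/18)^8 * Real.cos (π/18)^2 + (-43824:ℝ) * Real.sin (π/18)^8 * Real.cos (π/18)^4 + (-28831:ℝ) * Real.sin (π/18)^8 * Real.cos (π/18)^6 + (-17391:ℝ) * Real.sin (π/18)^8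 * Real.cos (π/18)^8 + (-9053:ℝ) * Real.sin (π/18)^8 * Real.cos (π/18)^10 + (163680:ℝ) * Real.sin (π/18)^10 + (100848:ℝ) * Real.sin (π/18)^10 * Real.cos (π/18)^2 + (57024:ℝ) * Real.sin (π/18)^10 * Real.cos (π/18)^4 + (28193:ℝ) * Real.sin (π/18)^10 * Real.cos (π/18)^6 + (10802:ℝ) * Real.sin (π/18)^10 * Real.cos (π/18)^8 + (-197296:ℝ) * Real.sin (π/18)^12 + (-96448:ℝ) * Real.sin (π/18)^12 * Real.cos (π/18)^2 + (-39424:ℝ) * Real.sin (π/18)^12 * Real.cos (π/18)^4 + (-11231:ℝ) * Real.sin (π/18)^12 * Real.cos (π/18)^6 + (147136:ℝ) * Real.sin (π/18)^14 + (50688:ℝ) * Real.sin (π/18)^14 * Real.cos (π/18)^2 + (11264:ℝ) * Real.sin (π/18)^14 * Real.cos (π/18)^4 + (-61952:ℝ) * Real.sin (π/18)^16 + (-11264:ℝ) * Real.sin (π/18)^16 * Real.cos (π/18)^2 + (11264:ℝ) * Real.sin (π/18)^18) * hpy +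
    ((-242:ℝ) * Real.sin (π/18)^2 + (-1452:ℝ) * Real.sin (π/18)^3 + (1122:ℝ) * Real.sin (π/18)^4 + (8668:ℝ) * Real.sin (π/18)^5 + (-2838:ℝ) * Real.sin (π/18)^6 + (-26004:ℝ) * Real.sin (π/18)^7 + (4224:ℝ) * Real.sin (π/18)^8 + (48048:ℝ) * Real.sin (π/18)^9 + (-3696:ℝ) * Real.sin (π/18)^10 + (-55968:ℝ) * Real.sin (π/18)^11 + (1760:ℝ) * Real.sin (π/18)^12 + (40128:ℝ) * Real.sin (π/18)^13 + (-352:ℝ) * Real.sin (π/18)^14 + (-16192:ℝ) * Real.sin (π/18)^15 + (2816:ℝ) * Real.sin (π/18)^17) * hs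
end

section
/- Let x = tan(π/18)·tan(π/9). Then tan(π/18)·tan(π/6)·(5/2 − 36x − 11x^2/2) = (11 − 169x − 25x^2)/3. -/
open Real

theorem hPM_consistency_S3 :
    tan (π / 18) * tan (π / 6) *
        (5 / 2 - 36 * (tan (π / 18) * tan (π / 9)) -
          11 * (tan (π / 18) * tan (π / 9)) ^ 2 / 2) =
      (11 - 169 * (tan (π / 18) * tan (π / 9)) - 25 * (tan (π / 18) * tan (π / 9)) ^ 2) / 3 := by
  have h18 : tan (π / 9) = 2 * tan (π / 18) / (1 - tan (π / 18) ^ 2) := by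
    rw [show π / 9 = 2 * (π / 18) by ring, Real.tan_two_mul]
  rw [h18, Real.tan_pi_div_six]
  set t := tan (π / 18) with ht
  have hπ := Real.pi_pos
  have ht0 : 0 < t := Real.tan_pos_of_pos_of_lt_pi_div_two (by positivity) (by linarith)
  have ht1 : t < 1 := by
    have h := Real.tan_lt_tan_of_nonneg_of_lt_pi_div_two
      (x := π / 18) (y := π / 4) (by positivity) (by linarith) (by linarith)
    rwa [Real.tan_pi_div_four] at h
  have h1t : 1 - t ^ 2 ≠ 0 := by nlinarith
  have hr0 : Real.sqrt 3 ≠ 0 := by positivity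
  have hsq : Real.sqrt 3 ^ 2 = 3 := Real.sq_sqrt (by norm_num)
  have hc0 : Real.cos (π / 18) ≠ 0 :=
    ne_of_gt (Real.cos_pos_of_mem_Ioo ⟨by linarith, by linarith⟩)
  have key : Real.sqrt 3 * (t * (3 - t ^ 2)) = 1 - 3 * t ^ 2 := by
    have hs : (1 : ℝ) / 2 = 3 * Real.sin (π / 18) - 4 * Real.sin (π / 18) ^ 3 := by
      rw [← Real.sin_pi_div_six, show π / 6 = 3 * (π / 18) by ring]
      exact Real.sin_three_mul _
    have hcc : Real.sqrt 3 / 2 = 4 * Real.cos (π / 18) ^ 3 - 3 * Real.cos (π / 18) := by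
      rw [← Real.cos_pi_div_six, show π / 6 = 3 * (π / 18) by ring]
      exact Real.cos_three_mul _
    have pyth := Real.sin_sq_add_cos_sq (π / 18)
    rw [ht, Real.tan_eq_sin_div_cos]
    field_simp
    linear_combination (-Real.sqrt 3) * hs + hcc +
      3 * (Real.sqrt 3 * Real.sin (π / 18) + Real.cos (π / 18)) * pyth
  have hmin : 3 * t ^ 6 - 27 * t ^ 4 + 33 * t ^ 2 - 1 = 0 := by
    linear_combination (Real.sqrt 3 * (t * (3 - t ^ 2)) + (1 - 3 * t ^ 2)) * key -
      (t * (3 - t ^ 2)) ^ 2 * hsq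
  field_simp
  linear_combination
    (-7821/32 * t + 131115/16 * t ^ 3 - 95733/8 * t ^ 5 + 82305/16 * t ^ 7 - 15687/32 * t ^ 9) * key +
      ((7341/32 * t - 1791/2 * t ^ 3 + 15687/32 * t ^ 5) -
        Real.sqrt 3 * (-22 + 23271/32 * t ^ 2 - 2937/4 * t ^ 4 + 5229/32 * t ^ 6)) * hmin
end

section
/- Let x = tan(π/11)·tan(π/22). Then 8·tan(π/11)^2·tan(π/22)·tan(5π/22) = 1 − 22x + 8x^2 + 6x^3 − x^4. -/
open Real

private lemma tan_add_of {x y : ℝ} (hx : Real.cos x ≠ 0) (hy : Real.cos y ≠ 0)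
    (hxy : Real.cos (x + y) ≠ 0) :
    Real.tan (x + y) = (Real.tan x + Real.tan y) / (1 - Real.tan x * Real.tan y) := by
  have hden : 1 - Real.tan x * Real.tan y ≠ 0 := by
    intro h
    apply hxy
    have h' : Real.cos x * Real.cos y * (1 - Real.tan x * Real.tan y) = Real.cos (x + y) := by
      rw [Real.tan_eq_sin_div_cos, Real.tan_eq_sin_div_cos, Real.cos_add]
      field_simp
    rw [← h', h, mul_zero]
  rw [Real.tan_eq_sin_div_cos (x + y), div_eq_div_iff hxy hden, Real.sin_add, Real.cos_add,
    Real.tan_eq_sin_div_cos, Real.tan_eq_sin_div_cos]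
  field_simp
  try exact Or.inl trivial

theorem hDS5_over_hM_poly :
    8 * tan (π / 11) ^ 2 * tan (π / 22) * tan (5 * π / 22) =
      1 - 22 * (tan (π / 11) * tan (π / 22)) + 8 * (tan (π / 11) * tan (π / 22)) ^ 2 +
        6 * (tan (π / 11) * tan (π / 22)) ^ 3 - (tan (π / 11) * tan (π / 22)) ^ 4 := by
  have hπ : 0 < π := Real.pi_pos
  have hcos : ∀ k : ℝ, 0 < k → k < 11 → Real.cos (k * π / 22) ≠ 0 := by
    intro k hk0 hk11
    have h1 : -(π/2) < k * π / 22 := by nlinarith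
    have h2 : k * π / 22 < π/2 := by nlinarith
    exact ne_of_gt (Real.cos_pos_of_mem_Ioo ⟨h1, h2⟩)
  have hc1 : Real.cos (π / 22) ≠ 0 := by
    have := hcos 1 one_pos (by norm_num); rwa [one_mul] at this
  have hc4 : Real.cos (2 * π / 11) ≠ 0 := by
    have := hcos 4 (by norm_num) (by norm_num)
    have e : (4 : ℝ) * π / 22 = 2 * π / 11 := by ring
    rwa [e] at this
  have hc2 : Real.cos (π / 11) ≠ 0 := by
    have := hcos 2 (by norm_num) (by norm_num)
    have e : (2 : ℝ) * π / 22 = π / 11 := by ring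
    rwa [e] at this
  have hc5 : Real.cos (5 * π / 22) ≠ 0 := hcos 5 (by norm_num) (by norm_num)
  have hc6 : Real.cos (3 * π / 11) ≠ 0 := by
    have := hcos 6 (by norm_num) (by norm_num)
    have e : (6 : ℝ) * π / 22 = 3 * π / 11 := by ring
    rwa [e] at this
  set t := tan (π / 22) with ht
  set a := tan (π / 11) with hadef
  set b := tan (2 * π / 11) with hbdef
  set f := tan (5 * π / 22) with hfdef
  set g := tan (3 * π / 11) with hgdef
  have ht0 : 0 < t := Real.tan_pos_of_pos_of_lt_pi_div_two (by positivity) (by nlinarith)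
  have ht1 : t < 1 := by
    have : t < tan (π/4) :=
      Real.tan_lt_tan_of_nonneg_of_lt_pi_div_two (by positivity) (by nlinarith) (by nlinarith)
    rwa [Real.tan_pi_div_four] at this
  have ha0 : 0 < a := Real.tan_pos_of_pos_of_lt_pi_div_two (by positivity) (by nlinarith)
  have ha1 : a < 1 := by
    have : a < tan (π/4) :=
      Real.tan_lt_tan_of_nonneg_of_lt_pi_div_two (by positivity) (by nlinarith) (by nlinarith)
    rwa [Real.tan_pi_div_four] at this
  have hf0 : 0 < f := Real.tan_pos_of_pos_of_lt_pi_div_two (by positivity) (by nlinarith)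
  have hg0 : 0 < g := Real.tan_pos_of_pos_of_lt_pi_div_two (by positivity) (by nlinarith)
  have h1t : (1 : ℝ) - t ^ 2 ≠ 0 := by nlinarith
  have h1a : (1 : ℝ) - a ^ 2 ≠ 0 := by nlinarith
  have ha : a = 2 * t / (1 - t ^ 2) := by
    rw [hadef, ht, show (π / 11 : ℝ) = 2 * (π / 22) by ring, Real.tan_two_mul]
  have hbden : ((1 : ℝ) - t ^ 2) ^ 2 - 4 * t ^ 2 ≠ 0 := by
    intro h
    apply h1a
    have : (1 : ℝ) - a ^ 2 = (((1 : ℝ) - t ^ 2) ^ 2 - 4 * t ^ 2) / (1 - t ^ 2) ^ 2 := by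
      rw [ha]; field_simp; ring
    rw [this, h, zero_div]
  have h2den : (1 : ℝ) - (2 * t / (1 - t ^ 2)) ^ 2 ≠ 0 := by
    have e : (1 : ℝ) - (2 * t / (1 - t ^ 2)) ^ 2 =
        ((1 - t ^ 2) ^ 2 - 4 * t ^ 2) / ((1 - t ^ 2) ^ 2) := by
      field_simp
      ring
    rw [e]
    exact div_ne_zero hbden (pow_ne_zero 2 h1t)
  have hb : b = 4 * t * (1 - t ^ 2) / ((1 - t ^ 2) ^ 2 - 4 * t ^ 2) := by
    rw [hbdef, show (2 * π / 11 : ℝ) = 2 * (π / 11) by ring, Real.tan_two_mul, ← hadef, ha]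
    rw [div_eq_div_iff h2den hbden]
    field_simp
    ring
  have hf : f = (t + b) / (1 - t * b) := by
    rw [hfdef, ht, hbdef, show (5 * π / 22 : ℝ) = π / 22 + 2 * π / 11 by ring]
    exact tan_add_of hc1 hc4 (by rw [show (π / 22 + 2 * π / 11 : ℝ) = 5 * π / 22 by ring]; exact hc5)
  have hg : g = (a + b) / (1 - a * b) := by
    rw [hgdef, hadef, hbdef, show (3 * π / 11 : ℝ) = π / 11 + 2 * π / 11 by ring]
    exact tan_add_of hc2 hc4 (by rw [show (π / 11 + 2 * π / 11 : ℝ) = 3 * π / 11 by ring]; exact hc6)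
  have hfg : f * g = 1 := by
    have hgi : g = f⁻¹ := by
      rw [hgdef, hfdef, show (3 * π / 11 : ℝ) = π / 2 - 5 * π / 22 by ring,
        Real.tan_pi_div_two_sub]
    rw [hgi, mul_inv_cancel₀ (ne_of_gt hf0)]
  have htb : (1 : ℝ) - t * b ≠ 0 := by
    intro h
    rw [hf, h, div_zero] at hf0
    exact lt_irrefl 0 hf0
  have hab : (1 : ℝ) - a * b ≠ 0 := by
    intro h
    rw [hg, h, div_zero] at hg0
    exact lt_irrefl 0 hg0
  -- cross-multiplied form of f*g = 1
  have hdiff : (t + b) * (a + b) - (1 - t * b) * (1 - a * b) = 0 := by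
    have h1 : (t + b) / (1 - t * b) * ((a + b) / (1 - a * b)) = 1 := by
      rw [← hf, ← hg]; exact hfg
    rw [div_mul_div_comm, div_eq_one_iff_eq (mul_ne_zero htb hab)] at h1
    rw [h1, sub_self]
  -- key polynomial identity 1
  have hkey1 : (1 - t ^ 2) * ((1 - t ^ 2) ^ 2 - 4 * t ^ 2) ^ 2 *
      ((t + b) * (a + b) - (1 - t * b) * (1 - a * b)) =
      11 * t ^ 10 - 165 * t ^ 8 + 462 * t ^ 6 - 330 * t ^ 4 + 55 * t ^ 2 - 1 := by
    rw [ha, hb]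
    have hD : ((1 : ℝ) - t ^ 2) ^ 2 - t ^ 2 * 4 ≠ 0 := by
      intro h; apply hbden; linear_combination h
    field_simp
    ring
  have hrel : 11 * t ^ 10 - 165 * t ^ 8 + 462 * t ^ 6 - 330 * t ^ 4 + 55 * t ^ 2 - 1 = 0 := by
    rw [← hkey1, hdiff, mul_zero]
  -- reduce the goal using f = (t+b)/(1-t*b)
  rw [hf]
  have hmain : 8 * a ^ 2 * t * ((t + b) / (1 - t * b)) = (8 * a ^ 2 * t * (t + b)) / (1 - t * b) := by
    ring
  rw [hmain, div_eq_iff htb]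
  -- key polynomial identity 2
  have hkey2 : (1 - t ^ 2) ^ 4 * ((1 - t ^ 2) ^ 2 - 4 * t ^ 2) *
      (8 * a ^ 2 * t * (t + b) -
        (1 - 22 * (a * t) + 8 * (a * t) ^ 2 + 6 * (a * t) ^ 3 - (a * t) ^ 4) * (1 - t * b)) =
      (1 - 3 * t ^ 2) *
        (11 * t ^ 10 - 165 * t ^ 8 + 462 * t ^ 6 - 330 * t ^ 4 + 55 * t ^ 2 - 1) := by
    rw [ha, hb]
    have hD : ((1 : ℝ) - t ^ 2) ^ 2 - t ^ 2 * 4 ≠ 0 := by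
      intro h; apply hbden; linear_combination h
    field_simp
    ring
  rw [hrel, mul_zero] at hkey2
  have hprod : (1 : ℝ) - t ^ 2 ≠ 0 := h1t
  have := mul_eq_zero.mp hkey2
  rcases this with h | h
  · exfalso
    rcases mul_eq_zero.mp h with h' | h'
    · exact hprod (pow_eq_zero_iff (by norm_num) |>.mp h')
    · exact hbden h'
  · linarith [h]
end

section
/- Let (d_n) and (p_n) be integer sequences with d_1 = p_1 = 1 and, for all n ≥ 2, d_n = 3·d_{n−1} + 2·p_{n−1} and p_n = 6·d_{n−1} + 2·p_{n−1}. Then for all n ≥ 1, 7·d_n = 6^n − (−1)^n and 7·p_n = 9·6^{n−1} + 2·(−1)^n. In particular d_1, d_2, d_3, d_4 = 1, 5, 31, 185 and p_1, p_2, p_3, p_4 = 1, 8, 46, 278. -/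
theorem decagon_pentagon_closed_form (d p : ℕ → ℤ)
    (hd1 : d 1 = 1) (hp1 : p 1 = 1)
    (hd : ∀ n, 2 ≤ n → d n = 3 * d (n - 1) + 2 * p (n - 1))
    (hp : ∀ n, 2 ≤ n → p n = 6 * d (n - 1) + 2 * p (n - 1)) :
    (∀ n, 1 ≤ n → 7 * d n = 6 ^ n - (-1) ^ n ∧ 7 * p n = 9 * 6 ^ (n - 1) + 2 * (-1) ^ n) ∧
    (d 1 = 1 ∧ d 2 = 5 ∧ d 3 = 31 ∧ d 4 = 185) ∧
    (p 1 = 1 ∧ p 2 = 8 ∧ p 3 = 46 ∧ p 4 = 278) := by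
  have main : ∀ n, 1 ≤ n → 7 * d n = 6 ^ n - (-1) ^ n ∧
      7 * p n = 9 * 6 ^ (n - 1) + 2 * (-1) ^ n := by
    intro n hn
    induction n, hn using Nat.le_induction with
    | base => simp [hd1, hp1]
    | succ n hn ih =>
      obtain ⟨m, rfl⟩ := Nat.exists_eq_add_of_le hn
      obtain ⟨ihd, ihp⟩ := ih
      have h1 : d (1 + m + 1) = 3 * d (1 + m) + 2 * p (1 + m) := by
        have := hd (1 + m + 1) (by omega)
        simpa using this
      have h2 : p (1 + m + 1) = 6 * d (1 + m) + 2 * p (1 + m) := by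
        have := hp (1 + m + 1) (by omega)
        simpa using this
      simp only [Nat.add_sub_cancel] at *
      constructor
      · rw [h1]
        have : 7 * (3 * d (1 + m) + 2 * p (1 + m)) =
            3 * (7 * d (1 + m)) + 2 * (7 * p (1 + m)) := by ring
        rw [this, ihd, ihp]
        have hm : 1 + m - 1 = m := by omega
        rw [hm]
        have h6 : (6:ℤ) ^ (1 + m) = 6 * 6 ^ m := by rw [pow_add]; ring
        rw [show 1 + m + 1 = (1 + m) + 1 from rfl, pow_succ, pow_succ, h6]
        ring
      · rw [h2]
        have : 7 * (6 * d (1 + m) + 2 * p (1 + m)) =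
            6 * (7 * d (1 + m)) + 2 * (7 * p (1 + m)) := by ring
        rw [this, ihd, ihp]
        have hm : 1 + m - 1 = m := by omega
        rw [hm]
        have h6 : (6:ℤ) ^ (1 + m) = 6 * 6 ^ m := by rw [pow_add]; ring
        rw [pow_succ, h6]
        ring
  refine ⟨main, ?_, ?_⟩
  · have h2 := (main 2 (by norm_num)).1
    have h3 := (main 3 (by norm_num)).1
    have h4 := (main 4 (by norm_num)).1
    norm_num at h2 h3 h4
    exact ⟨hd1, by omega, by omega, by omega⟩
  · have h2 := (main 2 (by norm_num)).2
    have h3 := (main 3 (by norm_num)).2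
    have h4 := (main 4 (by norm_num)).2
    norm_num at h2 h3 h4
    exact ⟨hp1, by omega, by omega, by omega⟩
end
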